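/- Let (a₁, …, aₙ) be an n-tuple of real symmetric 3×3 matrices. Then the family is transversely isotropic — i.e. there is a unit vector n ∈ ℝ³ such that every g ∈ SO(3) with g·n = n satisfies g aₖ gᵀ = aₖ for all k, but the family is not isotropic (not every g ∈ SO(3) fixes every aₖ) — if and only if there exists an index j such that: aⱼ is not a scalar multiple of the identity (aⱼ′ ≠ 0), det(x, aⱼ·x, aⱼ²·x) = 0 for every x ∈ ℝ³ (aⱼ × aⱼ² = 0), and for every index k, det(x, aⱼ·x, aₖ·x) = 0 for every x ∈ ℝ³ (aⱼ × aₖ = 0). -/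

import Mathlib

open Matrix

/-- The rotation group `SO(3)` as a set of real `3 × 3` matrices. -/
def SO3 : Set (Matrix (Fin 3) (Fin 3) ℝ) := {g | g * gᵀ = 1 ∧ g.det = 1}

/-- Determinant of the `3 × 3` matrix with columns `u`, `v`, `w`. -/
def det3 (u v w : Fin 3 → ℝ) : ℝ := (Matrix.of fun i j => ![u, v, w] j i).det

/-!
Let `K` be the cross-product matrix of a unit vector `v`, so that `v vᵀ + K` is the quarter turn
about `v` and its square is the half turn `2 v vᵀ - 1`. A symmetric matrix fixed by the quarter
turn therefore commutes with `v vᵀ` and with `K`, and the symmetric matrices commuting with `K` are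
exactly those in `span {1, v vᵀ}`; these are fixed by every rotation about `v`. If all `aₖ` lie in
this span, then `x`, `aⱼ x`, `aₖ x` all lie in `span {x, v}`, whence `aⱼ × aₖ = 0`.

Conversely, in an orthonormal eigenbasis of `aⱼ` the determinant `det (x, aⱼ x, aⱼ² x)` at
`x = (1, 1, 1)` is a Vandermonde determinant, so `aⱼ × aⱼ² = 0` forces a repeated eigenvalue and
`aⱼ = α + β v vᵀ` with `β ≠ 0`. Then `det (x, aⱼ x, b x) = β (v ⬝ x) det (x, v, b x)`, and
`det (x, v, b x) = xᵀ K b x`; its vanishing says that `K b` is skew, i.e. that `b` commutes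
with `K`.
-/

namespace TransverseIsotropy

section General

variable {R n : Type*} [CommRing R]

lemma vecMulVec_self_mul_self [Fintype n] {v : n → R} (hv : v ⬝ᵥ v = 1) :
    vecMulVec v v * vecMulVec v v = vecMulVec v v := by
  rw [vecMulVec_mul_vecMulVec, hv, one_smul]

lemma diagonal_eq_smul_one_add_smul_vecMulVec [DecidableEq n] {l : n → R} {k : n} {c : R}
    (hl : ∀ i ≠ k, l i = c) :
    diagonal l = c • 1 + (l k - c) • vecMulVec (Pi.single k 1) (Pi.single k 1) := by
  ext i j
  by_cases hij : i = j
  · subst hij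
    by_cases hik : i = k
    · subst hik
      simp [vecMulVec_apply]
    · simp [hl i hik, vecMulVec_apply, hik]
  · simp only [diagonal_apply_ne _ hij, Matrix.add_apply, Matrix.smul_apply, one_apply_ne hij,
      vecMulVec_apply, Pi.single_apply]
    split_ifs <;> simp_all

variable [Fintype n] [DecidableEq n]

lemma transpose_eq_neg_of_forall_dotProduct_mulVec_self {M : Matrix n n R}
    (h : ∀ x, x ⬝ᵥ M *ᵥ x = 0) : Mᵀ = -M := by
  ext i j
  have hii := h (Pi.single i 1)
  have hjj := h (Pi.single j 1)
  have hij := h (Pi.single i 1 + Pi.single j 1)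
  simp only [mulVec_add, add_dotProduct, dotProduct_add, mulVec_single_one, single_dotProduct,
    one_mul, col_apply] at hii hjj hij
  simp only [transpose_apply, Matrix.neg_apply]
  linear_combination hij - hii - hjj

lemma commute_of_conj_eq {g a : Matrix n n R} (hg : g * gᵀ = 1) (h : g * a * gᵀ = a) :
    Commute g a := by
  calc g * a = g * a * (gᵀ * g) := by rw [mul_eq_one_comm.mp hg, mul_one]
    _ = a * g := by rw [← mul_assoc, h]

lemma smul_one_add_smul_vecMulVec_mulVec (α β : R) (v x : n → R) :
    (α • 1 + β • vecMulVec v v) *ᵥ x = α • x + (β * (v ⬝ᵥ x)) • v := by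
  rw [add_mulVec, smul_mulVec, smul_mulVec, one_mulVec, vecMulVec_mulVec, op_smul_eq_smul,
    smul_smul]

lemma conj_smul_one_add_smul_vecMulVec {g : Matrix n n R} (hg : g * gᵀ = 1) (α β : R)
    (v : n → R) :
    g * (α • 1 + β • vecMulVec v v) * gᵀ = α • 1 + β • vecMulVec (g *ᵥ v) (g *ᵥ v) := by
  rw [mul_add, add_mul, mul_smul_comm, smul_mul_assoc, mul_one, hg, mul_smul_comm, smul_mul_assoc,
    mul_vecMulVec, vecMulVec_mul, vecMul_transpose]

end General

section CrossMatrix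

variable {R : Type*} [CommRing R] (v w : Fin 3 → R)

def crossMatrix : Matrix (Fin 3) (Fin 3) R :=
  !![0, -v 2, v 1; v 2, 0, -v 0; -v 1, v 0, 0]

lemma crossMatrix_mulVec : crossMatrix v *ᵥ w = v ⨯₃ w := by
  ext i
  fin_cases i <;> simp [crossMatrix, cross_apply, mulVec, dotProduct, Fin.sum_univ_three] <;> ring

lemma crossMatrix_transpose : (crossMatrix v)ᵀ = -crossMatrix v := by
  ext i j
  fin_cases i <;> fin_cases j <;> simp [crossMatrix]

lemma crossMatrix_smul (t : R) : crossMatrix (t • v) = t • crossMatrix v := by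
  ext i j
  fin_cases i <;> fin_cases j <;> simp [crossMatrix]

lemma crossMatrix_mul_self :
    crossMatrix v * crossMatrix v = vecMulVec v v - (v ⬝ᵥ v) • 1 := by
  ext i j
  fin_cases i <;> fin_cases j <;>
    simp [crossMatrix, vecMulVec_apply, vec3_dotProduct, mul_apply, Fin.sum_univ_three] <;> ring

lemma crossMatrix_mul_vecMulVec_self : crossMatrix v * vecMulVec v v = 0 := by
  rw [mul_vecMulVec, crossMatrix_mulVec, cross_self, zero_vecMulVec]

lemma vecMulVec_self_mul_crossMatrix : vecMulVec v v * crossMatrix v = 0 := by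
  rw [vecMulVec_mul, ← mulVec_transpose, crossMatrix_transpose, neg_mulVec, crossMatrix_mulVec,
    cross_self, neg_zero, vecMulVec_zero]

variable {v w}

lemma eq_smul_of_cross_eq_zero (hv : v ⬝ᵥ v = 1) (h : v ⨯₃ w = 0) : w = (v ⬝ᵥ w) • v := by
  have := cross_cross_eq_smul_sub_smul' v v w
  rw [h, map_zero, hv, one_smul] at this
  exact (sub_eq_zero.mp this.symm).symm

end CrossMatrix

abbrev M3 := Matrix (Fin 3) (Fin 3) ℝ

lemma eq_crossMatrix_of_transpose_eq_neg {M : M3} (hM : Mᵀ = -M) :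
    M = crossMatrix ![M 2 1, M 0 2, M 1 0] := by
  have e : ∀ i j, M j i = -M i j := fun i j => congrFun₂ hM i j
  ext i j
  fin_cases i <;> fin_cases j <;> simp [crossMatrix] <;>
    linarith [e 0 0, e 1 1, e 2 2, e 0 1, e 0 2, e 1 2]

lemma exists_eq_smul_crossMatrix {M : M3} {v : Fin 3 → ℝ} (hv : v ⬝ᵥ v = 1) (hM : Mᵀ = -M)
    (hMv : M *ᵥ v = 0) : ∃ t : ℝ, M = t • crossMatrix v := by
  set w : Fin 3 → ℝ := ![M 2 1, M 0 2, M 1 0]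
  have hw : M = crossMatrix w := eq_crossMatrix_of_transpose_eq_neg hM
  have hvw : v ⨯₃ w = 0 := by
    rw [← cross_anticomm, ← crossMatrix_mulVec, ← hw, hMv, neg_zero]
  exact ⟨v ⬝ᵥ w, by rw [← crossMatrix_smul, ← eq_smul_of_cross_eq_zero hv hvw, hw]⟩

lemma det3_eq_dotProduct_cross (u v w : Fin 3 → ℝ) : det3 u v w = u ⬝ᵥ v ⨯₃ w := by
  rw [triple_product_eq_det, det3, ← det_transpose]
  rfl

lemma det3_mulVec (M : M3) (u v w : Fin 3 → ℝ) :
    det3 (M *ᵥ u) (M *ᵥ v) (M *ᵥ w) = M.det * det3 u v w := by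
  rw [det3, det3, ← det_mul]
  congr 1
  ext i j
  fin_cases j <;> simp [mulVec, mul_apply, dotProduct]

lemma det3_eq_dotProduct_crossMatrix_mul_mulVec (v : Fin 3 → ℝ) (b : M3) (x : Fin 3 → ℝ) :
    det3 x v (b *ᵥ x) = x ⬝ᵥ (crossMatrix v * b) *ᵥ x := by
  rw [det3_eq_dotProduct_cross, ← mulVec_mulVec, crossMatrix_mulVec]

lemma det3_add_smul_self (x v : Fin 3 → ℝ) (b : M3) (t : ℝ) :
    det3 (x + t • v) v (b *ᵥ (x + t • v)) = det3 x v (b *ᵥ x) + t * det3 x v (b *ᵥ v) := by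
  simp only [det3_eq_dotProduct_cross, mulVec_add, mulVec_smul, map_add, map_smul,
    add_dotProduct, dotProduct_add, smul_dotProduct, dotProduct_smul, dot_self_cross, smul_eq_mul]
  ring

/-- For a unit vector `v` and symmetric `a`: `a` is fixed by every rotation about `v`. -/
def IsAxial (v : Fin 3 → ℝ) (a : M3) : Prop :=
  ∃ α β : ℝ, a = α • 1 + β • vecMulVec v v

variable {v : Fin 3 → ℝ} {a b : M3}

lemma isAxial_of_commute_crossMatrix (hv : v ⬝ᵥ v = 1) (hb : bᵀ = b)
    (h : Commute (crossMatrix v) b) : IsAxial v b := by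
  obtain ⟨μ, hbv⟩ : ∃ μ : ℝ, b *ᵥ v = μ • v := by
    refine ⟨_, eq_smul_of_cross_eq_zero hv ?_⟩
    rw [← crossMatrix_mulVec, mulVec_mulVec, h.eq, ← mulVec_mulVec, crossMatrix_mulVec,
      cross_self, mulVec_zero]
  obtain ⟨t, ht⟩ : ∃ t : ℝ, crossMatrix v * b = t • crossMatrix v := by
    refine exists_eq_smul_crossMatrix hv ?_ ?_
    · rw [transpose_mul, hb, crossMatrix_transpose, mul_neg, h.eq]
    · rw [← mulVec_mulVec, hbv, mulVec_smul, crossMatrix_mulVec, cross_self, smul_zero]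
  have hPb : vecMulVec v v * b = μ • vecMulVec v v := by
    rw [vecMulVec_mul, ← mulVec_transpose, hb, hbv, vecMulVec_smul]
  have hKKb : (vecMulVec v v - 1) * b = t • (vecMulVec v v - 1) := by
    have hKK := crossMatrix_mul_self v
    rw [hv, one_smul] at hKK
    rw [← hKK, mul_assoc, ht, mul_smul_comm]
  refine ⟨t, μ - t, ?_⟩
  calc b = vecMulVec v v * b - (vecMulVec v v - 1) * b := by noncomm_ring
    _ = _ := by rw [hPb, hKKb]; module

lemma commute_crossMatrix_of_forall_det3_eq_zero (hb : bᵀ = b)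
    (h : ∀ x, det3 x v (b *ᵥ x) = 0) : Commute (crossMatrix v) b := by
  have hskew := transpose_eq_neg_of_forall_dotProduct_mulVec_self
    fun x => (det3_eq_dotProduct_crossMatrix_mul_mulVec v b x).symm.trans (h x)
  rw [transpose_mul, hb, crossMatrix_transpose, mul_neg, neg_inj] at hskew
  exact hskew.symm

lemma forall_det3_eq_zero_of_forall_dotProduct_mul (hv : v ⬝ᵥ v = 1)
    (h : ∀ x, (v ⬝ᵥ x) * det3 x v (b *ᵥ x) = 0) (x : Fin 3 → ℝ) : det3 x v (b *ᵥ x) = 0 := by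
  -- along `x + t v` the factor becomes `v ⬝ᵥ x + t` and `det3` is affine in `t`; take the two
  -- values of `t` where the factor is `1` and `2`
  have hline (t : ℝ) : (v ⬝ᵥ x + t) * (det3 x v (b *ᵥ x) + t * det3 x v (b *ᵥ v)) = 0 := by
    rw [← det3_add_smul_self, ← h (x + t • v), dotProduct_add, dotProduct_smul, hv, smul_eq_mul,
      mul_one]
  have h1 := hline (1 - v ⬝ᵥ x)
  have h2 := hline (2 - v ⬝ᵥ x)
  linear_combination (2 - v ⬝ᵥ x) * h1 - (1 - v ⬝ᵥ x) / 2 * h2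

lemma isAxial_of_forall_det3_eq_zero (hv : v ⬝ᵥ v = 1) (hb : bᵀ = b) {α β : ℝ} (hβ : β ≠ 0)
    (h : ∀ x, det3 x ((α • 1 + β • vecMulVec v v) *ᵥ x) (b *ᵥ x) = 0) : IsAxial v b := by
  refine isAxial_of_commute_crossMatrix hv hb <| commute_crossMatrix_of_forall_det3_eq_zero hb <|
    forall_det3_eq_zero_of_forall_dotProduct_mul hv fun x => ?_
  have hx := h x
  rw [smul_one_add_smul_vecMulVec_mulVec, det3_eq_dotProduct_cross] at hx
  simp only [map_add, map_smul, LinearMap.add_apply, LinearMap.smul_apply, dotProduct_add,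
    dotProduct_smul, dot_self_cross, smul_eq_mul] at hx
  rw [det3_eq_dotProduct_cross]
  exact (mul_eq_zero.mp (by linear_combination hx)).resolve_left hβ

lemma IsAxial.det3_eq_zero (ha : IsAxial v a) (hb : IsAxial v b) (x : Fin 3 → ℝ) :
    det3 x (a *ᵥ x) (b *ᵥ x) = 0 := by
  obtain ⟨α, β, rfl⟩ := ha
  obtain ⟨γ, δ, rfl⟩ := hb
  simp only [smul_one_add_smul_vecMulVec_mulVec, det3_eq_dotProduct_cross, map_add, map_smul,
    LinearMap.add_apply, LinearMap.smul_apply, cross_self, dotProduct_add, dotProduct_smul,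
    dot_self_cross, dot_cross_self, dotProduct_zero, smul_zero, add_zero]

lemma IsAxial.mul_self (hv : v ⬝ᵥ v = 1) (ha : IsAxial v a) : IsAxial v (a * a) := by
  obtain ⟨α, β, rfl⟩ := ha
  refine ⟨α ^ 2, 2 * α * β + β ^ 2, ?_⟩
  simp only [add_mul, mul_add, smul_mul_smul_comm, one_mul, mul_one, vecMulVec_self_mul_self hv]
  module

lemma IsAxial.conj_eq (ha : IsAxial v a) {g : M3} (hg : g * gᵀ = 1) (hgv : g *ᵥ v = v) :
    g * a * gᵀ = a := by
  obtain ⟨α, β, rfl⟩ := ha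
  rw [conj_smul_one_add_smul_vecMulVec hg, hgv]

/-- Rodrigues' formula `cos θ • 1 + sin θ • K + (1 - cos θ) • v vᵀ` at `θ = π / 2`. -/
def quarterTurn (v : Fin 3 → ℝ) : M3 := vecMulVec v v + crossMatrix v

lemma quarterTurn_mul_transpose (hv : v ⬝ᵥ v = 1) : quarterTurn v * (quarterTurn v)ᵀ = 1 := by
  rw [quarterTurn, transpose_add, transpose_vecMulVec, crossMatrix_transpose, add_mul, mul_add,
    mul_add, vecMulVec_self_mul_self hv, mul_neg, vecMulVec_self_mul_crossMatrix,
    crossMatrix_mul_vecMulVec_self, mul_neg, crossMatrix_mul_self, hv, one_smul]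
  abel

lemma det_quarterTurn (hv : v ⬝ᵥ v = 1) : (quarterTurn v).det = 1 := by
  rw [vec3_dotProduct] at hv
  rw [det_fin_three]
  simp only [quarterTurn, crossMatrix, Matrix.add_apply, vecMulVec_apply, of_apply, cons_val',
    cons_val_zero, cons_val_fin_one, add_zero, cons_val_one, cons_val]
  linear_combination (1 + v 0 * v 0 + v 1 * v 1 + v 2 * v 2) * hv

lemma quarterTurn_mem_SO3 (hv : v ⬝ᵥ v = 1) : quarterTurn v ∈ SO3 :=
  ⟨quarterTurn_mul_transpose hv, det_quarterTurn hv⟩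

lemma quarterTurn_mulVec_self (hv : v ⬝ᵥ v = 1) : quarterTurn v *ᵥ v = v := by
  rw [quarterTurn, add_mulVec, vecMulVec_mulVec, hv, crossMatrix_mulVec, cross_self, add_zero,
    MulOpposite.op_one, one_smul]

lemma quarterTurn_mul_self (hv : v ⬝ᵥ v = 1) :
    quarterTurn v * quarterTurn v = (2 : ℝ) • vecMulVec v v - 1 := by
  rw [quarterTurn, add_mul, mul_add, mul_add, vecMulVec_self_mul_self hv,
    vecMulVec_self_mul_crossMatrix, crossMatrix_mul_vecMulVec_self, crossMatrix_mul_self, hv,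
    one_smul]
  module

lemma isAxial_of_forall_conj (hv : v ⬝ᵥ v = 1) (ha : aᵀ = a)
    (h : ∀ g ∈ SO3, g *ᵥ v = v → g * a * gᵀ = a) : IsAxial v a := by
  have hR : Commute (quarterTurn v) a := commute_of_conj_eq (quarterTurn_mul_transpose hv)
    (h _ (quarterTurn_mem_SO3 hv) (quarterTurn_mulVec_self hv))
  have hP : Commute (vecMulVec v v) a := by
    have hRR := hR.mul_left hR
    rw [quarterTurn_mul_self hv] at hRR
    have := (hRR.add_left (Commute.one_left a)).smul_left (1 / 2 : ℝ)
    rwa [sub_add_cancel, smul_smul, one_div_mul_cancel two_ne_zero, one_smul] at this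
  refine isAxial_of_commute_crossMatrix hv ha ?_
  simpa [quarterTurn] using hR.sub_left hP

lemma eq_trace_div_three_smul_one {c : ℝ} (ha : a = c • 1) : a = (a.trace / 3) • 1 := by
  subst ha
  rw [trace_smul, trace_one, Fintype.card_fin, smul_eq_mul]
  norm_num

lemma eq_trace_div_three_smul_one_of_forall_conj (ha : aᵀ = a)
    (h : ∀ g ∈ SO3, g * a * gᵀ = a) : a = (a.trace / 3) • 1 := by
  have he (i : Fin 3) : Pi.single i (1 : ℝ) ⬝ᵥ Pi.single i 1 = 1 := by simp
  obtain ⟨α, β, hαβ⟩ := isAxial_of_forall_conj (he 0) ha fun g hg _ => h g hg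
  obtain ⟨γ, δ, hγδ⟩ := isAxial_of_forall_conj (he 1) ha fun g hg _ => h g hg
  have e (i : Fin 3) := congrFun₂ (hαβ.symm.trans hγδ) i i
  have e0 := e 0; have e1 := e 1; have e2 := e 2
  simp only [Matrix.add_apply, Matrix.smul_apply, one_apply_eq, vecMulVec_apply, Pi.single_apply,
    Fin.reduceEq, if_true, if_false, smul_eq_mul, mul_one, mul_zero, add_zero] at e0 e1 e2
  refine eq_trace_div_three_smul_one (c := α) ?_
  rw [hαβ, show β = 0 by linarith, zero_smul, add_zero]

lemma exists_orthogonal_diagonalization {n : Type*} [Fintype n] [DecidableEq n]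
    {a : Matrix n n ℝ} (ha : aᵀ = a) :
    ∃ (U : Matrix n n ℝ) (l : n → ℝ), U * Uᵀ = 1 ∧ a = U * diagonal l * Uᵀ := by
  have hherm : a.IsHermitian := by rwa [IsHermitian, conjTranspose_eq_transpose_of_trivial]
  refine ⟨hherm.eigenvectorUnitary, hherm.eigenvalues, ?_, ?_⟩
  · simpa [star_eq_conjTranspose] using Unitary.coe_mul_star_self hherm.eigenvectorUnitary
  · simpa [star_eq_conjTranspose] using hherm.spectral_theorem

lemma det3_one_self_mul_self (l : Fin 3 → ℝ) :
    det3 1 l (l * l) = (l 1 - l 0) * (l 2 - l 0) * (l 2 - l 1) := by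
  rw [det3_eq_dotProduct_cross, cross_apply, vec3_dotProduct]
  simp only [Pi.one_apply, Pi.mul_apply, cons_val_zero, cons_val_one, cons_val]
  ring

lemma exists_forall_ne_eq_of_mul_sub_eq_zero {l : Fin 3 → ℝ}
    (h : (l 1 - l 0) * (l 2 - l 0) * (l 2 - l 1) = 0) : ∃ k c, ∀ i ≠ k, l i = c := by
  rcases mul_eq_zero.mp h with h | h
  · rcases mul_eq_zero.mp h with h | h
    · exact ⟨2, l 0, fun i hi => by fin_cases i <;> simp_all; linarith⟩
    · exact ⟨1, l 0, fun i hi => by fin_cases i <;> simp_all; linarith⟩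
  · exact ⟨0, l 1, fun i hi => by fin_cases i <;> simp_all; linarith⟩

lemma exists_isAxial_of_forall_det3_mul_self (ha : aᵀ = a)
    (h : ∀ x, det3 x (a *ᵥ x) ((a * a) *ᵥ x) = 0) : ∃ v, v ⬝ᵥ v = 1 ∧ IsAxial v a := by
  obtain ⟨U, l, hU, rfl⟩ := exists_orthogonal_diagonalization ha
  have hUU : Uᵀ * U = 1 := mul_eq_one_comm.mp hU
  have hdiag (m : Fin 3 → ℝ) : (U * diagonal m * Uᵀ) *ᵥ (U *ᵥ 1) = U *ᵥ m := by
    rw [mulVec_mulVec, mul_assoc _ Uᵀ, hUU, mul_one, ← mulVec_mulVec]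
    congr 1
    ext i
    simp [mulVec_diagonal]
  have hsq : U * diagonal l * Uᵀ * (U * diagonal l * Uᵀ) = U * diagonal (l * l) * Uᵀ := by
    simp only [mul_assoc, ← mul_assoc Uᵀ U, hUU, one_mul, ← mul_assoc (diagonal l),
      diagonal_mul_diagonal]
    rfl
  have hvan : (l 1 - l 0) * (l 2 - l 0) * (l 2 - l 1) = 0 := by
    have hx := h (U *ᵥ 1)
    rw [hsq, hdiag, hdiag, det3_mulVec, det3_one_self_mul_self] at hx
    refine (mul_eq_zero.mp hx).resolve_left (left_ne_zero_of_mul_eq_one (b := Uᵀ.det) ?_)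
    rw [← det_mul, hU, det_one]
  obtain ⟨k, c, hl⟩ := exists_forall_ne_eq_of_mul_sub_eq_zero hvan
  refine ⟨U *ᵥ Pi.single k 1, ?_, c, l k - c, ?_⟩
  · rw [dotProduct_mulVec, vecMul_mulVec, ← mulVec_transpose, hUU]
    simp
  · rw [diagonal_eq_smul_one_add_smul_vecMulVec hl, conj_smul_one_add_smul_vecMulVec hU]

end TransverseIsotropy

open TransverseIsotropy in
/-- An `n`-tuple `(a₁, …, aₙ)` of real symmetric `3 × 3` matrices is
transversely isotropic (some unit vector's axis rotations fix every `aₖ`, but the family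
is not isotropic) iff there is an index `j` with: `aⱼ` not a multiple of the identity,
`aⱼ × aⱼ² = 0`, and `aⱼ × aₖ = 0` for every `k`. -/
theorem family_transversely_isotropic_iff
    (n : ℕ) (a : Fin n → Matrix (Fin 3) (Fin 3) ℝ) (ha : ∀ k, (a k)ᵀ = a k) :
    ((∃ v : Fin 3 → ℝ, (∑ i, v i ^ 2) = 1 ∧
        ∀ g ∈ SO3, g.mulVec v = v → ∀ k, g * a k * gᵀ = a k) ∧
      ¬ (∀ g ∈ SO3, ∀ k, g * a k * gᵀ = a k)) ↔
    (∃ j, a j ≠ ((a j).trace / 3) • (1 : Matrix (Fin 3) (Fin 3) ℝ) ∧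
      (∀ x : Fin 3 → ℝ, det3 x ((a j).mulVec x) ((a j * a j).mulVec x) = 0) ∧
      ∀ k, ∀ x : Fin 3 → ℝ, det3 x ((a j).mulVec x) ((a k).mulVec x) = 0) := by
  have unit_iff (v : Fin 3 → ℝ) : (∑ i, v i ^ 2) = 1 ↔ v ⬝ᵥ v = 1 := by
    simp [dotProduct, sq]
  constructor
  · rintro ⟨⟨v, hv, hfix⟩, hniso⟩
    rw [unit_iff] at hv
    have hax (k) : IsAxial v (a k) :=
      isAxial_of_forall_conj hv (ha k) fun g hg hgv => hfix g hg hgv k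
    obtain ⟨j, hj⟩ : ∃ j, a j ≠ ((a j).trace / 3) • 1 := by
      by_contra! hscalar
      refine hniso fun g hg k => ?_
      rw [hscalar k, mul_smul_comm, mul_one, smul_mul_assoc, hg.1]
    exact ⟨j, hj, (hax j).det3_eq_zero ((hax j).mul_self hv), fun k => (hax j).det3_eq_zero (hax k)⟩
  · rintro ⟨j, hj, hsq, hcross⟩
    obtain ⟨v, hv, α, β, hαβ⟩ := exists_isAxial_of_forall_det3_mul_self (ha j) hsq
    have hβ : β ≠ 0 := by
      rintro rfl
      exact hj (eq_trace_div_three_smul_one (by rw [hαβ, zero_smul, add_zero]))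
    have hax (k) : IsAxial v (a k) :=
      isAxial_of_forall_det3_eq_zero hv (ha k) hβ (hαβ ▸ hcross k)
    refine ⟨⟨v, (unit_iff v).mpr hv, fun g hg hgv k => (hax k).conj_eq hg.1 hgv⟩, fun hiso => ?_⟩
    exact hj (eq_trace_div_three_smul_one_of_forall_conj (ha j) fun g hg => hiso g hg j)
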